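/- For every real t, φ(t)² ≤ Φ(t)·Φ(−t). (Equivalently, the Fisher information loss of the stochastic sign mechanism with noise scale σ, η^{Sgn}(θ) = φ(θ/σ) / ( σ·√(Φ(θ/σ)·Φ(−θ/σ)) ), is at most the Fisher information loss 1/σ of the Gaussian mechanism, for every location parameter θ.) -/

import Mathlib

/-!
Let `g(t) = Φ(t) Φ(-t) - φ(t)²`. It is even and tends to `0` at `+∞`, and since `φ' = -t φ`,
`g'(t) = φ(t) (2 t φ(t) - (Φ(t) - Φ(-t)))`. For `t ≥ 0`, `Φ(t) - Φ(-t) = ∫_{-t}^{t} φ ≥ 2 t φ(t)`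
because `φ` is smallest at the endpoints, so `g` is antitone on `[0, ∞)` and hence nonnegative.
-/

open MeasureTheory Real Filter Topology

noncomputable def phi (x : ℝ) : ℝ := (Real.sqrt (2 * Real.pi))⁻¹ * Real.exp (-(x ^ 2) / 2)

noncomputable def Phi (x : ℝ) : ℝ := ∫ t in Set.Iic x, phi t

lemma AntitoneOn.le_of_tendsto_atTop {α β : Type*} [Preorder α] [IsDirectedOrder α]
    [TopologicalSpace β] [Preorder β] [OrderClosedTopology β] {f : α → β} {a x : α} {l : β}
    (hf : AntitoneOn f (Set.Ici a)) (hl : Tendsto f atTop (𝓝 l)) (hx : a ≤ x) : l ≤ f x :=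
  have : Nonempty α := ⟨a⟩
  le_of_tendsto hl <| (eventually_ge_atTop x).mono fun _ hy ↦ hf hx (hx.trans hy) hy

lemma continuous_phi : Continuous phi := by
  unfold phi; fun_prop

lemma phi_nonneg (x : ℝ) : 0 ≤ phi x := by
  unfold phi; positivity

lemma phi_neg (x : ℝ) : phi (-x) = phi x := by
  simp [phi]

lemma phi_le_phi_of_abs_le {x y : ℝ} (h : |x| ≤ |y|) : phi y ≤ phi x := by
  have hsq := sq_le_sq.mpr h
  unfold phi
  gcongr _ * exp ?_
  linarith

lemma integrable_phi : Integrable phi := by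
  refine ((integrable_exp_neg_mul_sq (b := 1 / 2) (by norm_num)).const_mul
    (√(2 * π))⁻¹).congr (Eventually.of_forall fun x ↦ ?_)
  simp only [phi]
  ring_nf

lemma hasDerivAt_phi (x : ℝ) : HasDerivAt phi (-x * phi x) x := by
  have hexponent : HasDerivAt (fun y : ℝ ↦ -(y ^ 2) / 2) (-x) x := by
    simpa using ((hasDerivAt_pow 2 x).neg.div_const 2).congr_deriv (by ring)
  unfold phi
  exact (hexponent.exp.const_mul _).congr_deriv (by ring)

lemma tendsto_phi_atTop : Tendsto phi atTop (𝓝 0) := by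
  have h : Tendsto (fun t : ℝ ↦ -(t ^ 2) / 2) atTop atBot :=
    (tendsto_neg_atBot_iff.mpr (tendsto_pow_atTop two_ne_zero)).atBot_div_const two_pos
  have := (tendsto_exp_atBot.comp h).const_mul (√(2 * π))⁻¹
  rwa [mul_zero] at this

lemma Phi_sub_Phi (a b : ℝ) : Phi b - Phi a = ∫ t in a..b, phi t :=
  intervalIntegral.integral_Iic_sub_Iic integrable_phi.integrableOn integrable_phi.integrableOn

lemma Phi_nonneg (x : ℝ) : 0 ≤ Phi x :=
  integral_nonneg phi_nonneg

lemma Phi_le_integral_phi (x : ℝ) : Phi x ≤ ∫ t, phi t :=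
  setIntegral_le_integral integrable_phi (Eventually.of_forall phi_nonneg)

lemma hasDerivAt_Phi (x : ℝ) : HasDerivAt Phi (phi x) x := by
  have h := (intervalIntegral.integral_hasDerivAt_right (a := 0) (b := x)
    integrable_phi.intervalIntegrable
    continuous_phi.stronglyMeasurable.stronglyMeasurableAtFilter
    continuous_phi.continuousAt).const_add (Phi 0)
  refine h.congr_of_eventuallyEq (Eventually.of_forall fun y ↦ ?_)
  dsimp only
  rw [← Phi_sub_Phi, add_sub_cancel]

lemma tendsto_Phi_atBot : Tendsto Phi atBot (𝓝 0) := by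
  have h := (intervalIntegral_tendsto_integral_Iic 0 integrable_phi.integrableOn
    tendsto_id).const_sub (Phi 0)
  change Tendsto _ _ (𝓝 (Phi 0 - Phi 0)) at h
  rw [sub_self] at h
  refine h.congr fun x ↦ ?_
  rw [id, ← Phi_sub_Phi, sub_sub_cancel]

lemma two_mul_mul_phi_le_Phi_sub_Phi {t : ℝ} (ht : 0 ≤ t) : 2 * t * phi t ≤ Phi t - Phi (-t) := by
  rw [Phi_sub_Phi]
  calc 2 * t * phi t = ∫ _ in -t..t, phi t := by
        rw [intervalIntegral.integral_const, smul_eq_mul]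
        ring
    _ ≤ ∫ s in -t..t, phi s := by
      refine intervalIntegral.integral_mono_on (by linarith) intervalIntegrable_const
        integrable_phi.intervalIntegrable fun s hs ↦ phi_le_phi_of_abs_le ?_
      rw [abs_of_nonneg ht]
      exact abs_le.mpr hs

/-- At `t = θ / σ` this is `σ² Φ(t) Φ(-t) (1 / σ² - η^{Sgn}(θ)²)`. -/
noncomputable def fisherGap (t : ℝ) : ℝ := Phi t * Phi (-t) - phi t ^ 2

lemma fisherGap_neg (t : ℝ) : fisherGap (-t) = fisherGap t := by
  simp only [fisherGap, neg_neg, phi_neg, mul_comm]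

lemma hasDerivAt_fisherGap (t : ℝ) :
    HasDerivAt fisherGap (phi t * (2 * t * phi t - (Phi t - Phi (-t)))) t := by
  have hPhi_neg : HasDerivAt (fun s ↦ Phi (-s)) (-phi t) t := by
    simpa [phi_neg, Function.comp_def] using (hasDerivAt_Phi (-t)).comp t (hasDerivAt_neg t)
  unfold fisherGap
  exact (((hasDerivAt_Phi t).mul hPhi_neg).sub ((hasDerivAt_phi t).pow 2)).congr_deriv
    (by norm_num; ring)

lemma antitoneOn_fisherGap : AntitoneOn fisherGap (Set.Ici 0) := by
  refine antitoneOn_of_hasDerivWithinAt_nonpos (convex_Ici 0)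
    (fun x _ ↦ (hasDerivAt_fisherGap x).continuousAt.continuousWithinAt)
    (fun x _ ↦ (hasDerivAt_fisherGap x).hasDerivWithinAt) fun x hx ↦ ?_
  rw [interior_Ici, Set.mem_Ioi] at hx
  exact mul_nonpos_of_nonneg_of_nonpos (phi_nonneg x)
    (sub_nonpos.mpr (two_mul_mul_phi_le_Phi_sub_Phi hx.le))

lemma tendsto_fisherGap_atTop : Tendsto fisherGap atTop (𝓝 0) := by
  have hPhi_neg : Tendsto (fun t ↦ Phi (-t)) atTop (𝓝 0) :=
    tendsto_Phi_atBot.comp tendsto_neg_atTop_atBot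
  have hprod : Tendsto (fun t ↦ Phi t * Phi (-t)) atTop (𝓝 0) := by
    refine squeeze_zero (fun t ↦ mul_nonneg (Phi_nonneg t) (Phi_nonneg (-t)))
      (fun t ↦ mul_le_mul_of_nonneg_right (Phi_le_integral_phi t) (Phi_nonneg (-t))) ?_
    simpa using hPhi_neg.const_mul (∫ t, phi t)
  have := hprod.sub (tendsto_phi_atTop.pow 2)
  rwa [zero_pow two_ne_zero, sub_zero] at this

lemma fisherGap_nonneg (t : ℝ) : 0 ≤ fisherGap t := by
  rcases le_total 0 t with ht | ht
  · exact antitoneOn_fisherGap.le_of_tendsto_atTop tendsto_fisherGap_atTop ht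
  · rw [← fisherGap_neg]
    exact antitoneOn_fisherGap.le_of_tendsto_atTop tendsto_fisherGap_atTop (neg_nonneg.mpr ht)

/-- The Fisher information of the stochastic sign mechanism is at most that of
the Gaussian mechanism: `φ(t)² ≤ Φ(t)·Φ(−t)` for all `t`. -/
theorem stochastic_sign_fisher_info_le (t : ℝ) : phi t ^ 2 ≤ Phi t * Phi (-t) :=
  sub_nonneg.mp (fisherGap_nonneg t)
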